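/- For the regular pentagon's reduced slap map, with J = [(3-√5)/2, (√5-1)/2] and B = [(9-√5)/16, (7+√5)/16], the cocycle value satisfies α₄(x) = -2δ(x) for x ∈ J\B (away from 1/2 and discontinuities) and α₄(x) = 0 for x ∈ B (away from 1/2 and discontinuities). Consequently F₅⁴(B × {s}) ⊆ J × {s} for every s ∈ ℤ₅. -/

import Mathlib

/-- The reduced slap map of the regular pentagon. -/
noncomputable def phiRed5 (x : ℝ) : ℝ :=
  Int.fract (-(1 / Real.cos (Real.pi / 5)) * (x - 1 / 2))

/-- `δ(x) = -1` if `x < 1/2`, and `1` if `x > 1/2`. -/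
noncomputable def deltaSgn (x : ℝ) : ℤ := if x < 1 / 2 then -1 else 1

/-- The cocycle `α_n(x) = 2 Σ_{i=0}^{n-1} δ(φ₅^i(x))` (since `⌊5/2⌋ = 2`). -/
noncomputable def alpha5 (n : ℕ) (x : ℝ) : ℤ :=
  2 * ∑ i ∈ Finset.range n, deltaSgn (phiRed5^[i] x)

/-!
On `[0, 1]` the map is `φ₅ x = fract ((√5 - 1) (1/2 - x))`, affine on each side of `1/2`, and the
reflection `x ↦ 1 - x` conjugates it to itself away from `1/2` while negating `δ`; so `α_n(1 - x) =
-α_n(x)` along regular orbits and only `x < 1/2` needs to be examined. There the first four iterates are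
explicit affine functions of `x` over `ℤ[√5]`, and `b` is exactly the point with `φ₅² b = 1/2`. For
`x ∈ [e, b)` the orbit stays left of `1/2`, so `α₄ = -8 ≡ 2`; for `x ∈ [b, 1/2)` it goes left, left, right,
right, so `α₄ = 0`, and `φ₅⁴ x` lands back in `J`.
-/

open Real Set

theorem sqrt_five_bounds : 2 < √5 ∧ √5 < 9 / 4 := by
  have h := sq_sqrt (show (0 : ℝ) ≤ 5 by norm_num)
  constructor <;> nlinarith [sqrt_nonneg 5]

theorem phiRed5_eq_fract (x : ℝ) : phiRed5 x = Int.fract ((√5 - 1) * (1 / 2 - x)) := by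
  have hinv : -(1 / cos (π / 5)) * (x - 1 / 2) = (√5 - 1) * (1 / 2 - x) := by
    rw [cos_pi_div_five]
    field_simp
    linear_combination (2 * x - 1) * sq_sqrt (show (0 : ℝ) ≤ 5 by norm_num)
  rw [phiRed5, hinv]

theorem phiRed5_eq_of_nonneg {x : ℝ} (h0 : 0 ≤ (√5 - 1) * (1 / 2 - x))
    (h1 : (√5 - 1) * (1 / 2 - x) < 1) : phiRed5 x = (√5 - 1) * (1 / 2 - x) := by
  rw [phiRed5_eq_fract, Int.fract_eq_self.2 ⟨h0, h1⟩]

theorem phiRed5_eq_of_neg {x : ℝ} (h0 : -1 ≤ (√5 - 1) * (1 / 2 - x))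
    (h1 : (√5 - 1) * (1 / 2 - x) < 0) : phiRed5 x = (√5 - 1) * (1 / 2 - x) + 1 := by
  rw [phiRed5_eq_fract, Int.fract_eq_iff]
  exact ⟨by linarith, by linarith, -1, by push_cast; ring⟩

theorem phiRed5_mem_Icc (x : ℝ) : phiRed5 x ∈ Icc 0 1 :=
  ⟨Int.fract_nonneg _, (Int.fract_lt_one _).le⟩

theorem iterate_phiRed5_mem_Icc {x : ℝ} (hx : x ∈ Icc 0 1) : ∀ n, phiRed5^[n] x ∈ Icc 0 1
  | 0 => hx
  | n + 1 => by rw [Function.iterate_succ_apply']; exact phiRed5_mem_Icc _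

theorem phiRed5_pos {x : ℝ} (hx : x ∈ Icc 0 1) (hx' : x ≠ 1 / 2) : 0 < phiRed5 x := by
  obtain ⟨hs2, hs3⟩ := sqrt_five_bounds
  obtain ⟨hx0, hx1⟩ := hx
  rcases hx'.lt_or_gt with h | h
  · rw [phiRed5_eq_of_nonneg (by nlinarith) (by nlinarith)]
    nlinarith
  · rw [phiRed5_eq_of_neg (by nlinarith) (by nlinarith)]
    nlinarith

theorem deltaSgn_of_lt {x : ℝ} (h : x < 1 / 2) : deltaSgn x = -1 := if_pos h

theorem deltaSgn_of_gt {x : ℝ} (h : 1 / 2 < x) : deltaSgn x = 1 := if_neg h.not_gt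

theorem deltaSgn_one_sub {x : ℝ} (hx : x ≠ 1 / 2) : deltaSgn (1 - x) = -deltaSgn x := by
  rcases hx.lt_or_gt with h | h
  · rw [deltaSgn_of_gt (by linarith), deltaSgn_of_lt h]; rfl
  · rw [deltaSgn_of_lt (by linarith), deltaSgn_of_gt h]

theorem phiRed5_one_sub {x : ℝ} (hx : x ∈ Icc 0 1) (hx' : x ≠ 1 / 2) :
    phiRed5 (1 - x) = 1 - phiRed5 x := by
  have hfract := (phiRed5_pos hx hx').ne'
  rw [phiRed5_eq_fract] at hfract ⊢
  rw [phiRed5_eq_fract, ← Int.fract_neg hfract]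
  congr 1
  ring

theorem iterate_phiRed5_one_sub {x : ℝ} (hx : x ∈ Icc 0 1) :
    ∀ {n : ℕ}, (∀ i < n, phiRed5^[i] x ≠ 1 / 2) → phiRed5^[n] (1 - x) = 1 - phiRed5^[n] x
  | 0, _ => rfl
  | n + 1, hreg => by
    rw [Function.iterate_succ_apply', Function.iterate_succ_apply',
      iterate_phiRed5_one_sub hx fun i hi => hreg i (by omega)]
    exact phiRed5_one_sub (iterate_phiRed5_mem_Icc hx n) (hreg n (by omega))

theorem alpha5_four (x : ℝ) : alpha5 4 x = 2 * (deltaSgn x + deltaSgn (phiRed5 x)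
    + deltaSgn (phiRed5 (phiRed5 x)) + deltaSgn (phiRed5 (phiRed5 (phiRed5 x)))) := by
  simp [alpha5, Finset.sum_range_succ]

theorem alpha5_one_sub {x : ℝ} (hx : x ∈ Icc 0 1) {n : ℕ}
    (hreg : ∀ i < n, phiRed5^[i] x ≠ 1 / 2) : alpha5 n (1 - x) = -alpha5 n x := by
  have hterm : ∀ i ∈ Finset.range n,
      deltaSgn (phiRed5^[i] (1 - x)) = -deltaSgn (phiRed5^[i] x) := fun i hi => by
    have hi' := Finset.mem_range.1 hi
    rw [iterate_phiRed5_one_sub hx fun j hj => hreg j (by omega), deltaSgn_one_sub (hreg i hi')]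
  rw [alpha5, alpha5, Finset.sum_congr rfl hterm, Finset.sum_neg_distrib, mul_neg]

theorem alpha5_four_of_le_of_lt {x : ℝ} (hx1 : (3 - √5) / 2 ≤ x) (hx2 : x < (9 - √5) / 16) :
    alpha5 4 x = -8 := by
  have hs := sq_sqrt (show (0 : ℝ) ≤ 5 by norm_num)
  obtain ⟨hs2, hs3⟩ := sqrt_five_bounds
  have hl := mul_nonneg (sub_nonneg.2 hx1) (sub_pos.2 hs2).le
  have hu := mul_pos (sub_pos.2 hx2) (sub_pos.2 hs2)
  have h1 : phiRed5 x = (√5 - 1) / 2 - (√5 - 1) * x := by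
    rw [phiRed5_eq_of_nonneg (by nlinarith) (by nlinarith)]; ring
  have h2 : phiRed5 (phiRed5 x) = (3 * √5 - 7) / 2 + (6 - 2 * √5) * x := by
    rw [h1, phiRed5_eq_of_nonneg (by nlinarith) (by nlinarith)]
    linear_combination (x - 1 / 2) * hs
  have h3 : phiRed5 (phiRed5 (phiRed5 x)) = (11 * √5 - 23) / 2 + (16 - 8 * √5) * x := by
    rw [h2, phiRed5_eq_of_nonneg (by nlinarith) (by nlinarith)]
    linear_combination (2 * x - 3 / 2) * hs
  rw [alpha5_four, h3, h2, h1, deltaSgn_of_lt (by nlinarith), deltaSgn_of_lt (by nlinarith),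
    deltaSgn_of_lt (by nlinarith), deltaSgn_of_lt (by nlinarith)]
  norm_num

theorem alpha5_four_of_le_of_lt_half {x : ℝ} (hx1 : (9 - √5) / 16 ≤ x) (hx2 : x < 1 / 2)
    (hreg : phiRed5^[2] x ≠ 1 / 2) :
    alpha5 4 x = 0 ∧ phiRed5^[4] x ∈ Icc ((3 - √5) / 2) ((√5 - 1) / 2) := by
  have hs := sq_sqrt (show (0 : ℝ) ≤ 5 by norm_num)
  obtain ⟨hs2, hs3⟩ := sqrt_five_bounds
  have hl := mul_nonneg (sub_nonneg.2 hx1) (sub_pos.2 hs2).le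
  have hu := mul_pos (sub_pos.2 hx2) (sub_pos.2 hs2)
  have h1 : phiRed5 x = (√5 - 1) / 2 - (√5 - 1) * x := by
    rw [phiRed5_eq_of_nonneg (by nlinarith) (by nlinarith)]; ring
  have h2 : phiRed5 (phiRed5 x) = (3 * √5 - 7) / 2 + (6 - 2 * √5) * x := by
    rw [h1, phiRed5_eq_of_nonneg (by nlinarith) (by nlinarith)]
    linear_combination (x - 1 / 2) * hs
  have hy2 : 1 / 2 < phiRed5 (phiRed5 x) := by
    -- `φ₅² b = 1/2`, so only the regularity of the orbit makes this strict
    refine lt_of_le_of_ne ?_ (Ne.symm hreg)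
    rw [h2]; nlinarith
  rw [h2] at hy2
  have h3 : phiRed5 (phiRed5 (phiRed5 x)) = (16 - 8 * √5) * x + (11 * √5 - 21) / 2 := by
    rw [h2, phiRed5_eq_of_neg (by nlinarith) (by nlinarith)]
    linear_combination (2 * x - 3 / 2) * hs
  have h4 : phiRed5^[4] x = (56 - 24 * √5) * x + (33 * √5 - 75) / 2 := by
    rw [show phiRed5^[4] x = phiRed5 (phiRed5 (phiRed5 (phiRed5 x))) from rfl, h3,
      phiRed5_eq_of_neg (by nlinarith) (by nlinarith)]
    linear_combination (8 * x - 11 / 2) * hs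
  refine ⟨?_, ?_⟩
  · rw [alpha5_four, h3, h2, h1, deltaSgn_of_lt hx2, deltaSgn_of_lt (by nlinarith),
      deltaSgn_of_gt hy2, deltaSgn_of_gt (by nlinarith)]
    norm_num
  · rw [h4]
    constructor <;> nlinarith

theorem alpha5_four_of_lt_of_le {x : ℝ} (hx1 : (7 + √5) / 16 < x) (hx2 : x ≤ (√5 - 1) / 2)
    (hreg : ∀ i < 4, phiRed5^[i] x ≠ 1 / 2) : alpha5 4 x = 8 := by
  obtain ⟨hs2, hs3⟩ := sqrt_five_bounds
  have hsymm := alpha5_one_sub ⟨by linarith, by linarith⟩ hreg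
  rw [alpha5_four_of_le_of_lt (by linarith) (by linarith)] at hsymm
  linarith

theorem alpha5_four_of_half_lt_of_le {x : ℝ} (hx1 : 1 / 2 < x) (hx2 : x ≤ (7 + √5) / 16)
    (hreg : ∀ i < 4, phiRed5^[i] x ≠ 1 / 2) :
    alpha5 4 x = 0 ∧ phiRed5^[4] x ∈ Icc ((3 - √5) / 2) ((√5 - 1) / 2) := by
  obtain ⟨hs2, hs3⟩ := sqrt_five_bounds
  have hx : x ∈ Icc 0 1 := ⟨by linarith, by linarith⟩
  have hreg' : phiRed5^[2] (1 - x) ≠ 1 / 2 := by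
    rw [iterate_phiRed5_one_sub hx fun i hi => hreg i (by omega)]
    exact fun h => hreg 2 (by norm_num) (by linarith)
  obtain ⟨hα, hJ⟩ := alpha5_four_of_le_of_lt_half (x := 1 - x) (by linarith) (by linarith) hreg'
  rw [alpha5_one_sub hx hreg, neg_eq_zero] at hα
  rw [iterate_phiRed5_one_sub hx hreg] at hJ
  obtain ⟨hJl, hJu⟩ := hJ
  exact ⟨hα, by linarith, by linarith⟩

/-- With `J = [(3-√5)/2, (√5-1)/2]` and `B = [(9-√5)/16, (7+√5)/16]`: for
regular `x ∈ J \ B`, `α₄(x) = -2δ(x)` in `ℤ₅`; for regular `x ∈ B`,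
`α₄(x) = 0` in `ℤ₅`; consequently `F₅⁴(B × {s}) ⊆ J × {s}` for every `s ∈ ℤ₅`,
i.e. `φ₅⁴` maps `B` into `J` with no drift in the fibre. -/
theorem stmt_11 :
    (∀ x ∈ Set.Icc ((3 - Real.sqrt 5) / 2) ((Real.sqrt 5 - 1) / 2) \
        Set.Icc ((9 - Real.sqrt 5) / 16) ((7 + Real.sqrt 5) / 16),
      (∀ i < 4, phiRed5^[i] x ≠ 1 / 2) →
      ((alpha5 4 x : ℤ) : ZMod 5) = ((-2 * deltaSgn x : ℤ) : ZMod 5)) ∧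
    (∀ x ∈ Set.Icc ((9 - Real.sqrt 5) / 16) ((7 + Real.sqrt 5) / 16),
      (∀ i < 4, phiRed5^[i] x ≠ 1 / 2) →
      ((alpha5 4 x : ℤ) : ZMod 5) = 0 ∧
      phiRed5^[4] x ∈ Set.Icc ((3 - Real.sqrt 5) / 2) ((Real.sqrt 5 - 1) / 2)) := by
  obtain ⟨hs2, hs3⟩ := sqrt_five_bounds
  constructor
  · rintro x ⟨⟨hxl, hxu⟩, hxB⟩ hreg
    rcases lt_or_ge x ((9 - √5) / 16) with hlow | hlow
    · rw [alpha5_four_of_le_of_lt hxl hlow, deltaSgn_of_lt (by linarith)]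
      decide
    · have hhigh : (7 + √5) / 16 < x := not_le.1 fun h => hxB ⟨hlow, h⟩
      rw [alpha5_four_of_lt_of_le hhigh hxu hreg, deltaSgn_of_gt (by linarith)]
      decide
  · rintro x ⟨hxl, hxu⟩ hreg
    rcases (show x ≠ 1 / 2 from hreg 0 (by norm_num)).lt_or_gt with hlow | hhigh
    · obtain ⟨hα, hJ⟩ := alpha5_four_of_le_of_lt_half hxl hlow (hreg 2 (by norm_num))
      exact ⟨by rw [hα]; rfl, hJ⟩
    · obtain ⟨hα, hJ⟩ := alpha5_four_of_half_lt_of_le hhigh hxu hreg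
      exact ⟨by rw [hα]; rfl, hJ⟩
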